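/- arXiv:math/0212257 — 3 statements merged into one kernel-verified Lean document; each statement's English description precedes it below -/
import Mathlib

section
/- Let C = (C_{i,j})_{i,j ∈ I} be a generalized Cartan matrix with symmetrizing integers r_i ≥ 1, and fix i ∈ I, l ∈ ℤ. Let v : I × ℤ → ℤ be the exponent function of the monomial A_{i,l}^{−1}, namely v(i,l−r_i) = v(i,l+r_i) = −1, v(j, l+k) = +1 for each j ≠ i with C_{j,i} < 0 and each k ∈ {C_{j,i}+1, C_{j,i}+3, …, −C_{j,i}−1}, and v = 0 elsewhere. If for all j ≠ i with C_{j,i} < 0 one has −C_{j,i} ≤ r_i, then v is right negative: the maximal second coordinate in the support of v is l + r_i, and v(j, l+r_i) ≤ 0 for all j ∈ I. -/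
/-- The exponent function of `A_{i,l}⁻¹`: value `-1` at `(i, l ± rᵢ)` and `+1` at
`(j, l+k)` for `j ≠ i` with `C_{j,i} < 0` and `k ∈ {C_{j,i}+1, C_{j,i}+3, …, -C_{j,i}-1}`. -/
def aFun {I : Type*} [DecidableEq I] (C : I → I → ℤ) (r : I → ℤ) (i : I) (l : ℤ) :
    I × ℤ → ℤ := fun p =>
  (if p.1 = i ∧ (p.2 = l - r i ∨ p.2 = l + r i) then -1 else 0) +
    (if p.1 ≠ i ∧ C p.1 i < 0 ∧ C p.1 i + 1 ≤ p.2 - l ∧ p.2 - l ≤ -C p.1 i - 1 ∧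
        (p.2 - l - (C p.1 i + 1)) % 2 = 0 then 1 else 0)

/-- If `-C_{j,i} ≤ rᵢ` for all `j ≠ i` with `C_{j,i} < 0`, then the exponent
function of `A_{i,l}⁻¹` is right negative: the maximal second coordinate in its
support is `l + rᵢ` and its values there are `≤ 0`. -/
theorem aFun_rightNegative {I : Type*} [Fintype I] [DecidableEq I]
    (C : I → I → ℤ) (r : I → ℤ)
    (hdiag : ∀ i, C i i = 2)
    (hoff : ∀ i j, i ≠ j → C i j ≤ 0)
    (hzero : ∀ i j, C i j = 0 ↔ C j i = 0)
    (hr : ∀ i, 1 ≤ r i)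
    (i : I) (l : ℤ)
    (hb : ∀ j, j ≠ i → C j i < 0 → -C j i ≤ r i) :
    aFun C r i l (i, l + r i) = -1 ∧
    (∀ (j : I) (k : ℤ), aFun C r i l (j, k) ≠ 0 → k ≤ l + r i) ∧
    (∀ j : I, aFun C r i l (j, l + r i) ≤ 0) := by
  refine ⟨?_, ?_, ?_⟩
  · simp [aFun]
  · intro j k hk
    unfold aFun at hk
    have hri := hr i
    by_cases h1 : j = i ∧ (k = l - r i ∨ k = l + r i)
    · rcases h1.2 with h2 | h2 <;> omega
    · rw [if_neg h1] at hk
      by_cases h2 : j ≠ i ∧ C j i < 0 ∧ C j i + 1 ≤ k - l ∧ k - l ≤ -C j i - 1 ∧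
          (k - l - (C j i + 1)) % 2 = 0
      · have := hb j h2.1 h2.2.1
        omega
      · rw [if_neg h2] at hk
        omega
  · intro j
    unfold aFun
    dsimp only
    by_cases hji : j = i
    · subst hji; simp
    · rw [if_neg (by tauto), if_neg (by
        rintro ⟨-, hc, -, h4, -⟩
        have := hb j hji hc
        omega)]
      norm_num
end

section
/- A 2-segment is a set of integers of the form σ = {l, l+2, l+4, …, l+2k} for some l ∈ ℤ, k ≥ 0. Two 2-segments are in special position if their union is a 2-segment properly containing each of them. Then every finitely supported function u : ℤ → ℕ (a finite multiset of integers with multiplicities) can be written in exactly one way as a finite sum of indicator functions of 2-segments σ_1, …, σ_R (i.e. u = Σ_j 1_{σ_j}, as a multiset {σ_1,…,σ_R}) such that no two of the σ_j are in special position. -/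
/-!
Peel off the top run: if `m` is the largest point of the support of `u`, let `R` be the longest
2-segment ending at `m` inside the support. No 2-segment lying in the support can be in special
position with `R`, since their union would have to contain the point just below `R`, outside the
support; so `R` together with a decomposition of `u - 1_R` decomposes `u`. Conversely, `R` occurs
in every decomposition of `u`: otherwise take the longest member of the decomposition starting at
the bottom of `R`; the member covering the next point of `R` is in special position with it.
Induction on `u` concludes.
-/

/-- A 2-segment: a set of the form `{l, l+2, …, l+2k}`. -/
def IsTwoSegment (σ : Finset ℤ) : Prop :=
  ∃ (l : ℤ) (k : ℕ), σ = (Finset.range (k + 1)).image fun j : ℕ => l + 2 * (j : ℤ)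

/-- Two 2-segments are in special position if their union is a 2-segment properly
containing each of them. -/
def SpecialPosition (σ₁ σ₂ : Finset ℤ) : Prop :=
  IsTwoSegment (σ₁ ∪ σ₂) ∧ σ₁ ∪ σ₂ ≠ σ₁ ∧ σ₁ ∪ σ₂ ≠ σ₂

def twoSegment (l : ℤ) (k : ℕ) : Finset ℤ :=
  (Finset.range (k + 1)).image fun j : ℕ => l + 2 * (j : ℤ)

theorem isTwoSegment_twoSegment (l : ℤ) (k : ℕ) : IsTwoSegment (twoSegment l k) := ⟨l, k, rfl⟩

theorem mem_twoSegment {n l : ℤ} {k : ℕ} :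
    n ∈ twoSegment l k ↔ l ≤ n ∧ n ≤ l + 2 * k ∧ 2 ∣ n - l := by
  simp only [twoSegment, Finset.mem_image, Finset.mem_range, Nat.lt_succ_iff]
  constructor
  · rintro ⟨j, hj, rfl⟩
    exact ⟨by omega, by omega, ⟨j, by ring⟩⟩
  · rintro ⟨hl, hk, d, hd⟩
    exact ⟨d.toNat, by omega, by omega⟩

theorem left_mem_twoSegment (l : ℤ) (k : ℕ) : l ∈ twoSegment l k :=
  mem_twoSegment.mpr ⟨le_rfl, by omega, by simp⟩

theorem top_mem_twoSegment (l : ℤ) (k : ℕ) : l + 2 * k ∈ twoSegment l k :=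
  mem_twoSegment.mpr ⟨by omega, le_rfl, ⟨k, by ring⟩⟩

theorem IsTwoSegment.nonempty {σ : Finset ℤ} (hσ : IsTwoSegment σ) : σ.Nonempty := by
  obtain ⟨l, k, rfl⟩ := hσ
  exact ⟨l, left_mem_twoSegment l k⟩

theorem twoSegment_subset_twoSegment_iff {a b : ℤ} {i j : ℕ} :
    twoSegment b j ⊆ twoSegment a i ↔ a ≤ b ∧ b + 2 * j ≤ a + 2 * i ∧ 2 ∣ b - a := by
  constructor
  · intro h
    have hb := mem_twoSegment.mp (h (left_mem_twoSegment b j))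
    have htop := mem_twoSegment.mp (h (top_mem_twoSegment b j))
    omega
  · intro h n hn
    rw [mem_twoSegment] at hn ⊢
    omega

theorem isTwoSegment_twoSegment_union_iff {a b : ℤ} {i j : ℕ} :
    IsTwoSegment (twoSegment a i ∪ twoSegment b j) ↔
      2 ∣ b - a ∧ b ≤ a + 2 * i + 2 ∧ a ≤ b + 2 * j + 2 := by
  constructor
  · rintro ⟨c, t, hU⟩
    have hmem : ∀ n, n ∈ twoSegment a i ∪ twoSegment b j ↔ n ∈ twoSegment c t := by
      rw [hU]; exact fun n => Iff.rfl
    have ha := mem_twoSegment.mp ((hmem a).mp (Finset.mem_union_left _ (left_mem_twoSegment a i)))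
    have hb := mem_twoSegment.mp ((hmem b).mp (Finset.mem_union_right _ (left_mem_twoSegment b j)))
    have hfill : ∀ n, c ≤ n → n ≤ c + 2 * t → 2 ∣ n - c →
        n ∈ twoSegment a i ∨ n ∈ twoSegment b j := fun n h₁ h₂ h₃ =>
      Finset.mem_union.mp ((hmem n).mpr (mem_twoSegment.mpr ⟨h₁, h₂, h₃⟩))
    refine ⟨by omega, by_contra fun h => ?_, by_contra fun h => ?_⟩
    · rcases hfill (a + 2 * i + 2) (by omega) (by omega) (by omega) with h' | h' <;>
        rw [mem_twoSegment] at h' <;> omega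
    · rcases hfill (b + 2 * j + 2) (by omega) (by omega) (by omega) with h' | h' <;>
        rw [mem_twoSegment] at h' <;> omega
  · rintro ⟨hpar, hb, ha⟩
    refine ⟨min a b, ((max (a + 2 * i) (b + 2 * j) - min a b) / 2).toNat, ?_⟩
    ext n
    change _ ↔ n ∈ twoSegment _ _
    simp only [Finset.mem_union, mem_twoSegment]
    omega

theorem specialPosition_twoSegment_iff {a b : ℤ} {i j : ℕ} :
    SpecialPosition (twoSegment a i) (twoSegment b j) ↔
      (2 ∣ b - a ∧ b ≤ a + 2 * i + 2 ∧ a ≤ b + 2 * j + 2) ∧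
        ¬ twoSegment b j ⊆ twoSegment a i ∧ ¬ twoSegment a i ⊆ twoSegment b j := by
  rw [SpecialPosition, isTwoSegment_twoSegment_union_iff, Ne, Ne, Finset.union_eq_left,
    Finset.union_eq_right]

theorem SpecialPosition.symm {σ₁ σ₂ : Finset ℤ} (h : SpecialPosition σ₁ σ₂) :
    SpecialPosition σ₂ σ₁ := by
  obtain ⟨hseg, h₁, h₂⟩ := h
  rw [Finset.union_comm] at hseg h₁ h₂
  exact ⟨hseg, h₂, h₁⟩

theorem not_specialPosition_self (σ : Finset ℤ) : ¬ SpecialPosition σ σ :=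
  fun h => h.2.1 (Finset.union_self σ)

theorem sum_map_ite_mem_ne_zero_iff {α : Type*} [DecidableEq α] {S : Multiset (Finset α)} {n : α} :
    (S.map fun σ => if n ∈ σ then 1 else 0).sum ≠ 0 ↔ ∃ σ ∈ S, n ∈ σ := by
  simp [Multiset.sum_eq_zero_iff]

def IsSegmentDecomposition (u : ℤ →₀ ℕ) (S : Multiset (Finset ℤ)) : Prop :=
  (∀ σ ∈ S, IsTwoSegment σ) ∧
    (∀ n : ℤ, u n = (S.map fun σ => if n ∈ σ then 1 else 0).sum) ∧
    (∀ σ₁ ∈ S, ∀ σ₂ ∈ S, ¬ SpecialPosition σ₁ σ₂)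

namespace IsSegmentDecomposition

variable {u : ℤ →₀ ℕ} {S : Multiset (Finset ℤ)}

theorem ne_zero_of_mem (hS : IsSegmentDecomposition u S) {σ : Finset ℤ} (hσ : σ ∈ S) {n : ℤ}
    (hn : n ∈ σ) : u n ≠ 0 := by
  rw [hS.2.1 n]
  exact sum_map_ite_mem_ne_zero_iff.mpr ⟨σ, hσ, hn⟩

theorem exists_mem_of_ne_zero (hS : IsSegmentDecomposition u S) {n : ℤ} (hn : u n ≠ 0) :
    ∃ σ ∈ S, n ∈ σ := by
  rw [hS.2.1 n] at hn
  exact sum_map_ite_mem_ne_zero_iff.mp hn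

end IsSegmentDecomposition

theorem isSegmentDecomposition_zero_iff {S : Multiset (Finset ℤ)} :
    IsSegmentDecomposition 0 S ↔ S = 0 := by
  constructor
  · intro hS
    refine Multiset.eq_zero_of_forall_notMem fun σ hσ => ?_
    obtain ⟨n, hn⟩ := (hS.1 σ hσ).nonempty
    exact hS.ne_zero_of_mem hσ hn rfl
  · rintro rfl
    simp [IsSegmentDecomposition]

theorem isSegmentDecomposition_cons_iff {σ : Finset ℤ} {u : ℤ →₀ ℕ} {S : Multiset (Finset ℤ)} :
    IsSegmentDecomposition (Finsupp.indicator σ (fun _ _ => (1 : ℕ)) + u) (σ ::ₘ S) ↔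
      IsTwoSegment σ ∧ IsSegmentDecomposition u S ∧ ∀ τ ∈ S, ¬ SpecialPosition τ σ := by
  have hsum : ∀ n, (Finsupp.indicator σ (fun _ _ => (1 : ℕ)) + u) n =
      ((σ ::ₘ S).map fun τ => if n ∈ τ then 1 else 0).sum ↔
        u n = (S.map fun τ => if n ∈ τ then 1 else 0).sum := fun n => by
    simp [Finsupp.indicator_apply]
  simp only [IsSegmentDecomposition, Multiset.forall_mem_cons, hsum]
  constructor
  · rintro ⟨⟨hσ, hS⟩, hu, -, hspec⟩
    exact ⟨hσ, ⟨hS, hu, fun τ hτ => (hspec τ hτ).2⟩, fun τ hτ => (hspec τ hτ).1⟩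
  · rintro ⟨hσ, ⟨hS, hu, hspec⟩, hτσ⟩
    exact ⟨⟨hσ, hS⟩, hu, ⟨not_specialPosition_self σ, fun τ hτ h => hτσ τ hτ h.symm⟩,
      fun τ hτ => ⟨hτσ τ hτ, hspec τ hτ⟩⟩

structure IsTopRun (u : ℤ →₀ ℕ) (l : ℤ) (k : ℕ) : Prop where
  le_top : ∀ n, u n ≠ 0 → n ≤ l + 2 * k
  ne_zero : ∀ n ∈ twoSegment l k, u n ≠ 0
  gap : u (l - 2) = 0

theorem exists_isTopRun {u : ℤ →₀ ℕ} (hu : u ≠ 0) : ∃ l k, IsTopRun u l k := by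
  classical
  obtain ⟨m, hm, hmax⟩ :=
    u.support.exists_max_image id (Finsupp.support_nonempty_iff.mpr hu)
  simp only [Finsupp.mem_support_iff, id] at hm hmax
  obtain ⟨B, hB⟩ := u.support.bddBelow
  have hgap : ∃ j : ℕ, u (m - 2 * j) = 0 := by
    refine ⟨(m - B).toNat + 1, by_contra fun h => ?_⟩
    have := hB (Finsupp.mem_support_iff.mpr h)
    omega
  obtain ⟨k, hk⟩ := Nat.exists_eq_succ_of_ne_zero fun h0 : Nat.find hgap = 0 =>
    hm (by simpa [h0] using Nat.find_spec hgap)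
  refine ⟨m - 2 * k, k, fun n hn => by have := hmax n hn; omega, fun n hn => ?_, ?_⟩
  · obtain ⟨hln, hnm, d, hd⟩ := mem_twoSegment.mp hn
    have := Nat.find_min hgap (m := (k - d).toNat) (by omega)
    rwa [show m - 2 * ((k - d).toNat : ℤ) = n by omega] at this
  · have := Nat.find_spec hgap
    rw [hk] at this
    rwa [show m - 2 * ((k + 1 : ℕ) : ℤ) = m - 2 * k - 2 by push_cast; ring] at this

namespace IsTopRun

variable {u : ℤ →₀ ℕ} {l : ℤ} {k : ℕ}

theorem twoSegment_subset (h : IsTopRun u l k) {b : ℤ} {i : ℕ}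
    (hsupp : ∀ n ∈ twoSegment b i, u n ≠ 0) (hpar : 2 ∣ b - l) (hreach : l ≤ b + 2 * i + 2) :
    twoSegment b i ⊆ twoSegment l k := by
  have htop := h.le_top _ (hsupp _ (top_mem_twoSegment b i))
  have hlb : l ≤ b := by
    by_contra hbl
    exact hsupp _ (mem_twoSegment.mpr ⟨by omega, by omega, by omega⟩) h.gap
  exact twoSegment_subset_twoSegment_iff.mpr ⟨hlb, htop, hpar⟩

theorem not_specialPosition (h : IsTopRun u l k) {σ : Finset ℤ} (hσ : IsTwoSegment σ)
    (hsupp : ∀ n ∈ σ, u n ≠ 0) : ¬ SpecialPosition σ (twoSegment l k) := by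
  obtain ⟨b, i, rfl⟩ : ∃ b i, σ = twoSegment b i := hσ
  rw [specialPosition_twoSegment_iff]
  rintro ⟨⟨hpar, hreach, -⟩, -, hnot⟩
  exact hnot (h.twoSegment_subset hsupp (by omega) hreach)

theorem indicator_le (h : IsTopRun u l k) :
    Finsupp.indicator (twoSegment l k) (fun _ _ => 1) ≤ u := by
  refine Finsupp.le_def.mpr fun n => ?_
  rw [Finsupp.indicator_apply]
  split_ifs with hn
  · exact Nat.one_le_iff_ne_zero.mpr (h.ne_zero n hn)
  · exact Nat.zero_le _

theorem sub_indicator_lt (h : IsTopRun u l k) :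
    u - Finsupp.indicator (twoSegment l k) (fun _ _ => 1) < u := by
  refine lt_of_le_of_ne tsub_le_self fun heq => ?_
  have hl := left_mem_twoSegment l k
  have := congrArg (· l) heq
  simp only [Finsupp.tsub_apply, Finsupp.indicator_apply, dif_pos hl] at this
  have := h.ne_zero l hl
  omega

theorem exists_mem_subset_of_mem (h : IsTopRun u l k) {T : Multiset (Finset ℤ)}
    (hT : IsSegmentDecomposition u T) {n : ℤ} (hn : n ∈ twoSegment l k) :
    ∃ b i, twoSegment b i ∈ T ∧ n ∈ twoSegment b i ∧ twoSegment b i ⊆ twoSegment l k := by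
  obtain ⟨σ, hσT, hnσ⟩ := hT.exists_mem_of_ne_zero (h.ne_zero n hn)
  obtain ⟨b, i, rfl⟩ : ∃ b i, σ = twoSegment b i := hT.1 σ hσT
  obtain ⟨hln, -, hpar⟩ := mem_twoSegment.mp hn
  obtain ⟨-, hnb, hpar'⟩ := mem_twoSegment.mp hnσ
  exact ⟨b, i, hσT, hnσ,
    h.twoSegment_subset (fun _ => hT.ne_zero_of_mem hσT) (by omega) (by omega)⟩

theorem mem_of_isSegmentDecomposition (h : IsTopRun u l k) {T : Multiset (Finset ℤ)}
    (hT : IsSegmentDecomposition u T) : twoSegment l k ∈ T := by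
  classical
  obtain ⟨b₀, i₀, hT₀, hl₀, hsub₀⟩ := h.exists_mem_subset_of_mem hT (left_mem_twoSegment l k)
  obtain ⟨hb₀, -, -⟩ := mem_twoSegment.mp hl₀
  obtain ⟨hlb₀, htop₀, -⟩ := twoSegment_subset_twoSegment_iff.mp hsub₀
  rw [le_antisymm hb₀ hlb₀] at hT₀ htop₀
  set j := Nat.findGreatest (fun i => twoSegment l i ∈ T) k
  have hj : twoSegment l j ∈ T :=
    Nat.findGreatest_spec (P := fun i => twoSegment l i ∈ T) (by omega) hT₀
  have hjk : j ≤ k := Nat.findGreatest_le k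
  rcases hjk.eq_or_lt with hjk | hjk
  · exact hjk ▸ hj
  obtain ⟨c, t, hσ, hnσ, hsub⟩ := h.exists_mem_subset_of_mem hT
    (mem_twoSegment.mpr ⟨by omega, by omega, ⟨j + 1, by ring⟩⟩ : l + 2 * j + 2 ∈ _)
  obtain ⟨hcn, hnt, hpar⟩ := mem_twoSegment.mp hnσ
  obtain ⟨hlc, htop, -⟩ := twoSegment_subset_twoSegment_iff.mp hsub
  have hlc' : l < c := by
    refine lt_of_le_of_ne hlc fun hcl => ?_
    rw [← hcl] at hσ hnt
    have htj : t ≤ j := Nat.le_findGreatest (by omega) hσ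
    omega
  refine (hT.2.2 _ hj _ hσ (specialPosition_twoSegment_iff.mpr
    ⟨⟨by omega, by omega, by omega⟩, ?_, ?_⟩)).elim
  · rw [twoSegment_subset_twoSegment_iff]
    omega
  · rw [twoSegment_subset_twoSegment_iff]
    omega

end IsTopRun

/-- Every finite multiset of integers (a finitely supported function `ℤ →₀ ℕ`)
decomposes in exactly one way as a multiset of 2-segments, no two of which are in
special position. -/
theorem unique_two_segment_decomposition (u : ℤ →₀ ℕ) :
    ∃! S : Multiset (Finset ℤ),
      (∀ σ ∈ S, IsTwoSegment σ) ∧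
      (∀ n : ℤ, u n = (S.map fun σ => if n ∈ σ then 1 else 0).sum) ∧
      (∀ σ₁ ∈ S, ∀ σ₂ ∈ S, ¬ SpecialPosition σ₁ σ₂) := by
  change ∃! S, IsSegmentDecomposition u S
  induction u using WellFoundedLT.induction with
  | _ u ih =>
  rcases eq_or_ne u 0 with rfl | hu
  · exact ⟨0, isSegmentDecomposition_zero_iff.mpr rfl,
      fun _ hT => isSegmentDecomposition_zero_iff.mp hT⟩
  obtain ⟨l, k, hR⟩ := exists_isTopRun hu
  obtain ⟨S, hS, hS_unique⟩ := ih _ hR.sub_indicator_lt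
  have hsplit := (add_tsub_cancel_of_le hR.indicator_le).symm
  refine ⟨twoSegment l k ::ₘ S, ?_, fun T (hT : IsSegmentDecomposition u T) => ?_⟩
  · show IsSegmentDecomposition u _
    rw [hsplit, isSegmentDecomposition_cons_iff]
    exact ⟨isTwoSegment_twoSegment l k, hS, fun σ hσ =>
      hR.not_specialPosition (hS.1 σ hσ) fun n hn hun =>
        hS.ne_zero_of_mem hσ hn (by rw [Finsupp.tsub_apply, hun, Nat.zero_sub])⟩
  · have hRT := hR.mem_of_isSegmentDecomposition hT
    rw [← Multiset.cons_erase hRT, hsplit, isSegmentDecomposition_cons_iff] at hT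
    rw [← Multiset.cons_erase hRT, hS_unique _ hT.2.1]
end

section
/- Fix a finite index set I, a generalized Cartan matrix (C_{i,j}) of finite type with symmetrizers r_i ≥ 1, a dominant monomial M : I × ℤ → ℕ (finitely supported) and K ∈ ℤ. Let a_{i,l} : I × ℤ → ℤ be the exponent function of A_{i,l}^{−1} as above (values −1 at (i, l±r_i), +1 at (j, l+k) for j ≠ i, C_{j,i} < 0, k ∈ {C_{j,i}+1, C_{j,i}+3, …, −C_{j,i}−1}, and 0 elsewhere). Assume each a_{i,l} is right negative with maximal occurring second coordinate l + r_i (which holds in finite type). Then the set of dominant monomials of the form M + a_{i_1,l_1} + ⋯ + a_{i_R,l_R} with R ≥ 0 and all l_1, …, l_R ≥ K is finite. -/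
/-!
Call `p.2` the height of `p : I × ℤ`. Each `a_{i,l}` is `-1` at its top point `(i, l + dᵢ)`,
nonpositive at all heights `≥ l + dᵢ`, and `≤ 1` everywhere. In a dominant sum
`M + ∑ a_{iₜ,lₜ}` the summand with the highest top point makes the sum negative there unless
`M` is positive there, so all top points lie below the support of `M`; together with `lₜ ≥ K`
this confines the pairs `(iₜ, lₜ)` to a finite box `T`. On `T` the weights
`(#T + 1) ^ (height - K)` give every `a_{i,l}` a negative weighted sum, while the weighted sum
of `M + ∑ a_{iₜ,lₜ}` is nonnegative, so the number of summands is bounded by the weighted sum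
of `M`.
-/

open Finset

section

variable {α : Type*}

/-- For a finitely supported `f`, the existence of such a `q` is equivalent to right negativity:
`q` is a point of negative value at the maximal height of the support. -/
def IsRightNegativeAt (f : α × ℤ → ℤ) (q : α × ℤ) : Prop :=
  f q < 0 ∧ ∀ p : α × ℤ, q.2 ≤ p.2 → f p ≤ 0

theorem Finsupp.exists_forall_lt_snd_eq_zero {β : Type*} [Zero β] (M : α × ℤ →₀ β) :
    ∃ L : ℤ, ∀ p : α × ℤ, L < p.2 → M p = 0 := by
  obtain ⟨L, hL⟩ := (M.support.image Prod.snd).bddAbove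
  exact ⟨L, fun p hp => Finsupp.notMem_support_iff.mp fun hmem =>
    hp.not_ge (hL (mem_image_of_mem Prod.snd hmem))⟩

theorem snd_le_of_nonneg_add_sum {ι : Type*} [Fintype ι] {M : α × ℤ → ℤ} {L : ℤ}
    (hM : ∀ p : α × ℤ, L < p.2 → M p ≤ 0) {f : ι → α × ℤ → ℤ} {q : ι → α × ℤ}
    (hf : ∀ t, IsRightNegativeAt (f t) (q t)) (hnonneg : ∀ p, 0 ≤ M p + ∑ t, f t p)
    (t : ι) : (q t).2 ≤ L := by
  classical
  by_contra! hL
  obtain ⟨s, -, hs⟩ := exists_max_image univ (fun s => (q s).2) ⟨t, mem_univ t⟩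
  have hrest : ∑ u ∈ univ.erase s, f u (q s) ≤ 0 :=
    sum_nonpos fun u _ => (hf u).2 (q s) (hs u (mem_univ u))
  have hsum : ∑ u, f u (q s) < 0 := by
    rw [← add_sum_erase _ _ (mem_univ s)]
    linarith [(hf s).1]
  linarith [hnonneg (q s), hM (q s) (hL.trans_le (hs t (mem_univ t)))]

/-- The base exceeds `#T`, so one point of `T` outweighs all lower points of `T` together. -/
def heightWeight (T : Finset (α × ℤ)) (K : ℤ) (p : α × ℤ) : ℤ :=
  (#T + 1 : ℤ) ^ (p.2 - K).toNat

variable {T : Finset (α × ℤ)} {K : ℤ}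

theorem heightWeight_pos (p : α × ℤ) : 0 < heightWeight T K p := by
  unfold heightWeight
  positivity

theorem card_add_one_mul_heightWeight_le {p q : α × ℤ} (hp : K ≤ p.2) (hpq : p.2 < q.2) :
    (#T + 1 : ℤ) * heightWeight T K p ≤ heightWeight T K q := by
  unfold heightWeight
  rw [← pow_succ']
  exact pow_le_pow_right₀ (by omega) (by omega)

theorem sum_heightWeight_mul_neg (hT : ∀ p ∈ T, K ≤ p.2) {f : α × ℤ → ℤ} {q : α × ℤ}
    (hq : q ∈ T) (hf_le : ∀ p, f p ≤ 1) (hf : IsRightNegativeAt f q) :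
    ∑ p ∈ T, heightWeight T K p * f p < 0 := by
  classical
  set B : ℤ := #T + 1 with hB_def
  set w := heightWeight T K
  have hB : 0 < B := by positivity
  have hterm : ∀ p ∈ T.erase q, B * (w p * f p) ≤ w q := by
    intro p hp
    rcases le_or_gt q.2 p.2 with hqp | hpq
    · have : w p * f p ≤ 0 :=
        mul_nonpos_of_nonneg_of_nonpos (heightWeight_pos p).le (hf.2 p hqp)
      exact (mul_nonpos_of_nonneg_of_nonpos hB.le this).trans (heightWeight_pos q).le
    · calc B * (w p * f p) ≤ B * w p := by
            gcongr
            exact mul_le_of_le_one_right (heightWeight_pos p).le (hf_le p)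
        _ ≤ w q := card_add_one_mul_heightWeight_le (hT p (mem_of_mem_erase hp)) hpq
  have hrest : B * ∑ p ∈ T.erase q, w p * f p ≤ #T * w q := by
    rw [mul_sum]
    calc ∑ p ∈ T.erase q, B * (w p * f p) ≤ #(T.erase q) • w q :=
          sum_le_card_nsmul _ _ _ hterm
      _ ≤ #T • w q := nsmul_le_nsmul_left (heightWeight_pos q).le (card_erase_le)
      _ = #T * w q := nsmul_eq_mul _ _
  have htop : w q * f q ≤ -w q := by nlinarith [hf.1, heightWeight_pos (T := T) (K := K) q]
  have hsum : B * ∑ p ∈ T, w p * f p ≤ -w q :=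
    calc B * ∑ p ∈ T, w p * f p = B * (w q * f q) + B * ∑ p ∈ T.erase q, w p * f p := by
          rw [← add_sum_erase _ _ hq, mul_add]
      _ ≤ B * -w q + #T * w q := add_le_add (mul_le_mul_of_nonneg_left htop hB.le) hrest
      _ = -w q := by rw [hB_def]; ring
  exact neg_of_mul_neg_right (hsum.trans_lt (neg_neg_of_pos (heightWeight_pos q))) hB.le

theorem card_le_sum_heightWeight_mul (hT : ∀ p ∈ T, K ≤ p.2) {ι : Type*} [Fintype ι]
    {M : α × ℤ → ℤ} {f : ι → α × ℤ → ℤ} {q : ι → α × ℤ} (hqT : ∀ t, q t ∈ T)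
    (hf_le : ∀ t p, f t p ≤ 1) (hf : ∀ t, IsRightNegativeAt (f t) (q t))
    (hnonneg : ∀ p, 0 ≤ M p + ∑ t, f t p) :
    (Fintype.card ι : ℤ) ≤ ∑ p ∈ T, heightWeight T K p * M p := by
  have hsum_nonneg : 0 ≤ ∑ p ∈ T, heightWeight T K p * (M p + ∑ t, f t p) :=
    sum_nonneg fun p _ => mul_nonneg (heightWeight_pos p).le (hnonneg p)
  have hsplit : ∑ p ∈ T, heightWeight T K p * (M p + ∑ t, f t p) =
      ∑ p ∈ T, heightWeight T K p * M p + ∑ t, ∑ p ∈ T, heightWeight T K p * f t p := by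
    simp only [mul_add, mul_sum, sum_add_distrib]
    rw [sum_comm]
  have hneg : ∑ t, ∑ p ∈ T, heightWeight T K p * f t p ≤ ∑ _t : ι, (-1 : ℤ) :=
    sum_le_sum fun t _ =>
      Int.le_sub_one_of_lt (sum_heightWeight_mul_neg hT (hqT t) (hf_le t) (hf t))
  simp only [sum_const, card_univ, nsmul_eq_mul, mul_neg, mul_one] at hneg
  linarith

end

theorem finite_setOf_fin_tuples_le {β γ : Type*} {T : Set β} (hT : T.Finite) (N : ℕ)
    (F : ∀ R : ℕ, (Fin R → β) → γ) :
    {m | ∃ R ≤ N, ∃ x : Fin R → β, (∀ t, x t ∈ T) ∧ F R x = m}.Finite := by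
  refine ((Set.finite_Iic N).biUnion fun R _ =>
    (Set.Finite.pi' fun _ : Fin R => hT).image (F R)).subset ?_
  rintro m ⟨R, hR, x, hx, rfl⟩
  exact Set.mem_biUnion hR ⟨x, hx, rfl⟩

section aFun

variable {I : Type*} [DecidableEq I] (C : I → I → ℤ) (r : I → ℤ) (i : I) (l : ℤ)

theorem aFun_le_one (p : I × ℤ) : aFun C r i l p ≤ 1 := by
  unfold aFun
  split_ifs <;> norm_num

theorem aFun_isRightNegativeAt
    (hsupp : ∀ (j : I) (k : ℤ), aFun C r i l (j, k) ≠ 0 → k ≤ l + r i)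
    (htop : ∀ j : I, aFun C r i l (j, l + r i) ≤ 0) :
    IsRightNegativeAt (aFun C r i l) (i, l + r i) := by
  refine ⟨by simp [aFun], fun ⟨j, k⟩ hk => ?_⟩
  by_cases h : aFun C r i l (j, k) = 0
  · exact h.le
  · obtain rfl : k = l + r i := le_antisymm (hsupp j k h) hk
    exact htop j

end aFun

theorem finite_dominant_below_general (I : Type*) [Fintype I] [DecidableEq I]
    (C : I → I → ℤ) (d : I → ℤ)
    (hd : ∀ i, 1 ≤ d i)
    (hrn : ∀ (i : I) (l : ℤ),
      aFun C d i l (i, l + d i) ≠ 0 ∧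
      (∀ (j : I) (k : ℤ), aFun C d i l (j, k) ≠ 0 → k ≤ l + d i) ∧
      (∀ j : I, aFun C d i l (j, l + d i) ≤ 0))
    (M : (I × ℤ) →₀ ℕ) (K : ℤ) :
    {m : I × ℤ → ℤ |
      (∀ p : I × ℤ, 0 ≤ m p) ∧
      ∃ (R : ℕ) (ii : Fin R → I) (ll : Fin R → ℤ),
        (∀ t : Fin R, K ≤ ll t) ∧
        m = fun p => (M p : ℤ) + ∑ t : Fin R, aFun C d (ii t) (ll t) p}.Finite := by
  obtain ⟨L, hL⟩ := M.exists_forall_lt_snd_eq_zero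
  set T : Finset (I × ℤ) := univ ×ˢ Icc K L
  have hTK : ∀ p ∈ T, K ≤ p.2 := fun p hp => (mem_Icc.mp (mem_product.mp hp).2).1
  set N := ∑ p ∈ T, heightWeight T K p * M p
  refine (finite_setOf_fin_tuples_le T.finite_toSet N.toNat fun R x p =>
    (M p : ℤ) + ∑ t, aFun C d (x t).1 (x t).2 p).subset ?_
  rintro m ⟨hdom, R, ii, ll, hK, rfl⟩
  have hneg t : IsRightNegativeAt (aFun C d (ii t) (ll t)) (ii t, ll t + d (ii t)) :=
    aFun_isRightNegativeAt C d _ _ (hrn _ _).2.1 (hrn _ _).2.2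
  have htop t : ll t + d (ii t) ≤ L :=
    snd_le_of_nonneg_add_sum (fun p hp => by simp [hL p hp]) hneg hdom t
  have hR : (R : ℤ) ≤ N := by
    simpa using card_le_sum_heightWeight_mul hTK
      (fun t => mem_product.mpr
        ⟨mem_univ _, mem_Icc.mpr ⟨by linarith [hd (ii t), hK t], htop t⟩⟩)
      (fun t => aFun_le_one C d _ _) hneg hdom
  refine ⟨R, by omega, fun t => (ii t, ll t), fun t => ?_, rfl⟩
  exact mem_product.mpr ⟨mem_univ _, mem_Icc.mpr ⟨hK t, by linarith [hd (ii t), htop t]⟩⟩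

/-- Given a dominant monomial `M` and `K ∈ ℤ`, assuming every `aFun C d i l` is
right negative with maximal occurring second coordinate `l + dᵢ`, the set of
dominant monomials of the form `M · A_{i₁,l₁}⁻¹ ⋯ A_{i_R,l_R}⁻¹` with all
`l_r ≥ K` is finite. -/
theorem finite_dominant_below (I : Type*) [Fintype I] [DecidableEq I]
    (C : I → I → ℤ) (d : I → ℤ)
    (hdiag : ∀ i, C i i = 2)
    (hoff : ∀ i j, i ≠ j → C i j ≤ 0)
    (hzero : ∀ i j, C i j = 0 ↔ C j i = 0)
    (hd : ∀ i, 1 ≤ d i)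
    (hrn : ∀ (i : I) (l : ℤ),
      aFun C d i l (i, l + d i) ≠ 0 ∧
      (∀ (j : I) (k : ℤ), aFun C d i l (j, k) ≠ 0 → k ≤ l + d i) ∧
      (∀ j : I, aFun C d i l (j, l + d i) ≤ 0))
    (M : (I × ℤ) →₀ ℕ) (K : ℤ) :
    {m : I × ℤ → ℤ |
      (∀ p : I × ℤ, 0 ≤ m p) ∧
      ∃ (R : ℕ) (ii : Fin R → I) (ll : Fin R → ℤ),
        (∀ t : Fin R, K ≤ ll t) ∧
        m = fun p => (M p : ℤ) + ∑ t : Fin R, aFun C d (ii t) (ll t) p}.Finite :=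
  finite_dominant_below_general I C d hd hrn M K
end
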